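/- arXiv:0709.2056 — 3 statements merged into one kernel-verified Lean document; each statement's English description precedes it below -/
import Mathlib

section
/- Let s : (0,1] → ℝ be continuously differentiable and define u(x) = s(‖x‖)·x^⊥ for 0 < ‖x‖ ≤ 1, and p₀(x) = −∫_{‖x‖}^{1} ρ·s(ρ)² dρ. Then for every x with 0 < ‖x‖ < 1: (a) the derivative of u at x applied to the vector u(x) equals −s(‖x‖)²·x (i.e. ∇_{u}u(x) = −s(‖x‖)²·x), and (b) p₀ is differentiable at x with gradient ∇p₀(x) = s(‖x‖)²·x; hence ∇_{u}u + ∇p₀ = 0, so u is a steady solution of the Euler equations with pressure p₀. -/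
open Metric Set MeasureTheory Filter Real Topology
open scoped RealInnerProductSpace MeasureTheory

/-!
Write `r = ‖x‖`. Both `u` and `p₀` are built from radial functions, so everything follows from
the chain rule through the norm, whose derivative at `x ≠ 0` is `⟪x, ·⟫ / r`. For the velocity,
`u x` is orthogonal to `x`, so along `u x` the radial factor `s ‖·‖` does not vary and
`Du(x)(u x) = s r • (s r • x^⊥)^⊥ = -(s r)² • x`. For the pressure, the fundamental theorem of
calculus gives `d/dr p₀ = r s(r)²`, hence `∇p₀(x) = (r s(r)² / r) • x = s(r)² • x`.
-/

noncomputable section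

/-- The plane `ℝ²`, as a Euclidean space. -/
abbrev E2 := EuclideanSpace ℝ (Fin 2)

/-- Counterclockwise rotation of `x` by `90°`:  `x^⊥ = (-x₂, x₁)`. -/
def perp (x : E2) : E2 := WithLp.toLp 2 ![-(x 1), x 0]

section RadialCalculus

variable {F : Type*} [NormedAddCommGroup F] [InnerProductSpace ℝ F] {x : F}

theorem hasFDerivAt_norm_of_ne_zero (hx : x ≠ 0) :
    HasFDerivAt (fun y : F => ‖y‖) (‖x‖⁻¹ • innerSL ℝ x) x := by
  have hsqrt := (hasStrictFDerivAt_norm_sq x).hasFDerivAt.sqrt (by positivity)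
  simp only [sqrt_sq (norm_nonneg _)] at hsqrt
  refine hsqrt.congr_fderiv ?_
  ext v
  simp
  field_simp

theorem HasDerivAt.hasGradientAt_comp_norm [CompleteSpace F] {g : ℝ → ℝ} {g' : ℝ}
    (hg : HasDerivAt g g' ‖x‖) (hx : x ≠ 0) :
    HasGradientAt (fun y : F => g ‖y‖) ((g' / ‖x‖) • x) x := by
  rw [hasGradientAt_iff_hasFDerivAt]
  refine (hg.comp_hasFDerivAt x (hasFDerivAt_norm_of_ne_zero hx)).congr_fderiv ?_
  ext v
  simp only [FunLike.coe_smul, Pi.smul_apply, innerSL_apply_apply, smul_eq_mul,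
    InnerProductSpace.toDual_apply_apply, real_inner_smul_left]
  ring

theorem HasDerivAt.hasFDerivAt_comp_norm_smul {s : ℝ → ℝ} {s' : ℝ} (A : F →L[ℝ] F)
    (hs : HasDerivAt s s' ‖x‖) (hx : x ≠ 0) :
    HasFDerivAt (fun y => s ‖y‖ • A y)
      (s ‖x‖ • A + (s' • ‖x‖⁻¹ • innerSL ℝ x).smulRight (A x)) x :=
  (hs.comp_hasFDerivAt x (hasFDerivAt_norm_of_ne_zero hx)).smul A.hasFDerivAt

theorem HasDerivAt.fderiv_comp_norm_smul_apply_of_inner_eq_zero {s : ℝ → ℝ} {s' : ℝ}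
    (A : F →L[ℝ] F) (hs : HasDerivAt s s' ‖x‖) (hx : x ≠ 0) {v : F} (hv : ⟪x, v⟫ = 0) :
    fderiv ℝ (fun y => s ‖y‖ • A y) x v = s ‖x‖ • A v := by
  rw [(hs.hasFDerivAt_comp_norm_smul A hx).fderiv]
  simp [hv]

end RadialCalculus

theorem hasDerivAt_integral_left_of_continuousOn_Ioc {E : Type*} [NormedAddCommGroup E]
    [NormedSpace ℝ E] [CompleteSpace E] {f : ℝ → E} {a b t : ℝ}
    (hf : ContinuousOn f (Ioc a b)) (ht : t ∈ Ioo a b) :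
    HasDerivAt (fun τ => ∫ ρ in τ..b, f ρ) (-f t) t := by
  have hnhds : Ioc a b ∈ 𝓝 t := Ioc_mem_nhds ht.1 ht.2
  have hsub : Icc t b ⊆ Ioc a b := Icc_subset_Ioc_iff ht.2.le |>.mpr ⟨ht.1, le_rfl⟩
  exact intervalIntegral.integral_hasDerivAt_left
    ((hf.mono hsub).intervalIntegrable_of_Icc ht.2.le)
    ⟨Ioc a b, hnhds, hf.aestronglyMeasurable measurableSet_Ioc⟩ (hf.continuousAt hnhds)

def perpL : E2 →L[ℝ] E2 :=
  LinearMap.toContinuousLinearMap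
    { toFun := perp
      map_add' := fun a b => by ext i; fin_cases i <;> simp [perp]; ring
      map_smul' := fun c a => by ext i; fin_cases i <;> simp [perp] }

theorem perpL_apply (x : E2) : perpL x = perp x := rfl

theorem perp_perp (x : E2) : perp (perp x) = -x := by
  ext i
  fin_cases i <;> simp [perp]

theorem inner_perp_self (x : E2) : ⟪x, perp x⟫ = 0 := by
  simp [PiLp.inner_apply, Fin.sum_univ_two, perp]
  ring

theorem stmt3_general (s s' : ℝ → ℝ)
    (hs : ∀ r ∈ Ioc (0:ℝ) 1, HasDerivWithinAt s (s' r) (Ioc 0 1) r)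
    (u : E2 → E2) (hu : ∀ x : E2, u x = s ‖x‖ • perp x)
    (p₀ : E2 → ℝ) (hp : ∀ x : E2, p₀ x = -∫ ρ in (‖x‖)..1, ρ * (s ρ)^2) :
    ∀ x : E2, 0 < ‖x‖ → ‖x‖ < 1 →
      fderiv ℝ u x (u x) = -((s ‖x‖)^2 • x)
      ∧ HasGradientAt p₀ ((s ‖x‖)^2 • x) x
      ∧ fderiv ℝ u x (u x) + (s ‖x‖)^2 • x = 0 := by
  intro x hx0 hx1
  have hx : x ≠ 0 := norm_pos_iff.mp hx0
  have hsx : HasDerivAt s (s' ‖x‖) ‖x‖ := (hs _ ⟨hx0, hx1.le⟩).hasDerivAt (Ioc_mem_nhds hx0 hx1)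
  have hconv : fderiv ℝ u x (u x) = -((s ‖x‖)^2 • x) := by
    have hux : u x = s ‖x‖ • perpL x := hu x
    rw [hux, show u = fun y => s ‖y‖ • perpL y from funext hu,
      hsx.fderiv_comp_norm_smul_apply_of_inner_eq_zero perpL hx
        (by rw [inner_smul_right, perpL_apply, inner_perp_self, mul_zero]),
      map_smul, perpL_apply, perpL_apply, perp_perp, smul_smul, smul_neg, sq]
  have hscont : ContinuousOn s (Ioc 0 1) := fun t ht => (hs t ht).continuousWithinAt
  have hpr : HasDerivAt (fun t => -∫ ρ in t..1, ρ * (s ρ)^2) (‖x‖ * (s ‖x‖)^2) ‖x‖ := by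
    have hint := hasDerivAt_integral_left_of_continuousOn_Ioc (f := fun ρ => ρ * (s ρ)^2)
      (continuousOn_id.mul (hscont.pow 2)) ⟨hx0, hx1⟩
    rw [← neg_neg (‖x‖ * _)]
    exact hint.neg
  have hgrad : HasGradientAt p₀ ((s ‖x‖)^2 • x) x := by
    rw [show p₀ = _ from funext hp]
    convert hpr.hasGradientAt_comp_norm hx using 2
    field_simp
  exact ⟨hconv, hgrad, by rw [hconv, neg_add_cancel]⟩

/-- If `s` is continuously differentiable on `(0,1]`, `u x = s(‖x‖) • x^⊥`, and
`p₀ x = - ∫_{‖x‖}^1 ρ s(ρ)² dρ`, then for `0 < ‖x‖ < 1` one has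
`∇_u u (x) = Du(x)(u x) = - s(‖x‖)² • x`, `p₀` has gradient `s(‖x‖)² • x` at `x`,
and hence `∇_u u + ∇ p₀ = 0`: `u` is a steady Euler solution with pressure `p₀`. -/
theorem stmt3 (s s' : ℝ → ℝ)
    (hs : ∀ r ∈ Ioc (0:ℝ) 1, HasDerivWithinAt s (s' r) (Ioc 0 1) r)
    (hs'c : ContinuousOn s' (Ioc 0 1))
    (u : E2 → E2) (hu : ∀ x : E2, u x = s ‖x‖ • perp x)
    (p₀ : E2 → ℝ) (hp : ∀ x : E2, p₀ x = -∫ ρ in (‖x‖)..1, ρ * (s ρ)^2) :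
    ∀ x : E2, 0 < ‖x‖ → ‖x‖ < 1 →
      fderiv ℝ u x (u x) = -((s ‖x‖)^2 • x)
      ∧ HasGradientAt p₀ ((s ‖x‖)^2 • x) x
      ∧ fderiv ℝ u x (u x) + (s ‖x‖)^2 • x = 0 :=
  stmt3_general s s' hs u hu p₀ hp
end
end

section
/- Let s : (0,1] → ℝ be measurable and define u(x) = s(‖x‖)·x^⊥ on the open unit disk D, and p₀(x) = −∫_{‖x‖}^{1} ρ·s(ρ)² dρ. If u ∈ L²(D), then p₀ ∈ L¹(D) and ‖p₀‖_{L¹(D)} ≤ (1/2)·‖u‖²_{L²(D)}. -/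
open Metric Set MeasureTheory Filter Real
open scoped RealInnerProductSpace MeasureTheory

noncomputable section

/-!
In polar coordinates, the integral of a radial function `f ‖x‖` over the unit disk is
`2π ∫₀¹ r f(r) dr`. Since `|p₀ x| = ∫_{‖x‖}^1 ρ s(ρ)² dρ`, Tonelli's theorem gives
`∫_D |p₀| = 2π ∫₀¹ (ρ²/2) ρ s(ρ)² dρ`, exactly half of `∫_D ‖u‖² = 2π ∫₀¹ ρ · ρ² s(ρ)² dρ`.
Working with lower Lebesgue integrals, all of this holds without integrability assumptions, and
the `L²` hypothesis then makes both sides finite.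
-/

open scoped ENNReal
open Module

theorem antitone_setLIntegral_Ioo (g : ℝ → ℝ≥0∞) (b : ℝ) :
    Antitone fun r => ∫⁻ ρ in Ioo r b, g ρ :=
  fun _ _ hrr' => lintegral_mono_set (Ioo_subset_Ioo_left hrr')

theorem setLIntegral_Ioo_mul_setLIntegral_Ioo {φ g : ℝ → ℝ≥0∞} (hφ : Measurable φ)
    (hg : Measurable g) (a b : ℝ) :
    ∫⁻ r in Ioo a b, φ r * ∫⁻ ρ in Ioo r b, g ρ =
      ∫⁻ ρ in Ioo a b, (∫⁻ r in Ioo a ρ, φ r) * g ρ := by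
  set F : ℝ × ℝ → ℝ≥0∞ := {p | p.1 < p.2}.indicator fun p => φ p.1 * g p.2
  have hF : Measurable F :=
    ((hφ.comp measurable_fst).mul (hg.comp measurable_snd)).indicator
      (measurableSet_lt measurable_fst measurable_snd)
  have inner_snd : ∀ r ∈ Ioo a b, ∫⁻ ρ in Ioo a b, F (r, ρ) = φ r * ∫⁻ ρ in Ioo r b, g ρ := by
    intro r hr
    have : ∀ ρ, F (r, ρ) = (Ioi r).indicator (fun ρ => φ r * g ρ) ρ := fun ρ => by
      simp [F, indicator_apply]
    rw [funext this, lintegral_indicator measurableSet_Ioi, Measure.restrict_restrict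
      measurableSet_Ioi, Ioi_inter_Ioo, max_eq_left hr.1.le, lintegral_const_mul _ hg]
  have inner_fst : ∀ ρ ∈ Ioo a b, ∫⁻ r in Ioo a b, F (r, ρ) = (∫⁻ r in Ioo a ρ, φ r) * g ρ := by
    intro ρ hρ
    have : ∀ r, F (r, ρ) = (Iio ρ).indicator (fun r => φ r * g ρ) r := fun r => by
      simp [F, indicator_apply]
    rw [funext this, lintegral_indicator measurableSet_Iio, Measure.restrict_restrict
      measurableSet_Iio, Iio_inter_Ioo, min_eq_left hρ.2.le, lintegral_mul_const _ hφ]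
  calc ∫⁻ r in Ioo a b, φ r * ∫⁻ ρ in Ioo r b, g ρ
      = ∫⁻ r in Ioo a b, ∫⁻ ρ in Ioo a b, F (r, ρ) :=
        (setLIntegral_congr_fun measurableSet_Ioo inner_snd).symm
    _ = ∫⁻ ρ in Ioo a b, ∫⁻ r in Ioo a b, F (r, ρ) :=
        lintegral_lintegral_swap hF.aemeasurable
    _ = _ := setLIntegral_congr_fun measurableSet_Ioo inner_fst

theorem setLIntegral_Ioo_zero_ofReal_pow_pred {n : ℕ} (hn : 0 < n) {ρ : ℝ} (hρ : 0 ≤ ρ) :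
    ∫⁻ r in Ioo 0 ρ, ENNReal.ofReal (r ^ (n - 1)) = ENNReal.ofReal (ρ ^ n / n) := by
  obtain ⟨m, rfl⟩ := Nat.exists_eq_add_of_lt hn
  rw [Measure.restrict_congr_set Ioo_ae_eq_Ioc, ← ofReal_integral_eq_lintegral_ofReal
    (intervalIntegral.intervalIntegrable_pow _).1, ← intervalIntegral.integral_of_le hρ, integral_pow]
  · simp
  · filter_upwards [ae_restrict_mem measurableSet_Ioc] with r hr
    exact pow_nonneg hr.1.le _

section Radial

variable {E : Type*} [NormedAddCommGroup E] [NormedSpace ℝ E] [MeasurableSpace E] [BorelSpace E]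
  [FiniteDimensional ℝ E] [Nontrivial E] (μ : Measure E) [μ.IsAddHaarMeasure]

theorem lintegral_fun_norm_addHaar {f : ℝ → ℝ≥0∞} (hf : Measurable f) :
    ∫⁻ x, f ‖x‖ ∂μ = finrank ℝ E * μ (ball 0 1) *
      ∫⁻ y in Ioi (0:ℝ), ENNReal.ofReal (y ^ (finrank ℝ E - 1)) * f y :=
  calc ∫⁻ x, f ‖x‖ ∂μ = ∫⁻ x : ({(0:E)}ᶜ : Set E), f ‖x.1‖ ∂(μ.comap (↑)) := by
        rw [lintegral_subtype_comap (measurableSet_singleton _).compl fun x => f ‖x‖,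
          restrict_compl_singleton]
    _ = ∫⁻ p, f p.2 ∂(μ.toSphere.prod (.volumeIoiPow (finrank ℝ E - 1))) := by
        simpa only [Function.comp_apply, homeomorphUnitSphereProd_apply_snd_coe] using
          μ.measurePreserving_homeomorphUnitSphereProd.lintegral_comp
            (hf.comp (measurable_subtype_coe.comp measurable_snd))
    _ = μ.toSphere univ * ∫⁻ y : Ioi (0:ℝ), f y ∂(.volumeIoiPow (finrank ℝ E - 1)) := by
        rw [lintegral_prod _ (by fun_prop)]
        simp only [lintegral_const, mul_comm]
    _ = μ.toSphere univ * ∫⁻ y : Ioi (0:ℝ), ENNReal.ofReal (y.1 ^ (finrank ℝ E - 1)) * f y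
          ∂(volume.comap ((↑) : Ioi (0:ℝ) → ℝ)) := by
        rw [Measure.volumeIoiPow]
        exact congrArg _ (lintegral_withDensity_eq_lintegral_mul _
          (measurable_subtype_coe.pow_const _).ennreal_ofReal (hf.comp measurable_subtype_coe))
    _ = _ := by
        rw [lintegral_subtype_comap measurableSet_Ioi
          fun y : ℝ => ENNReal.ofReal (y ^ (finrank ℝ E - 1)) * f y,
          Measure.toSphere_apply_univ, mul_right_comm]

theorem setLIntegral_ball_fun_norm_addHaar {f : ℝ → ℝ≥0∞} (hf : Measurable f) (R : ℝ) :
    ∫⁻ x in ball (0:E) R, f ‖x‖ ∂μ = finrank ℝ E * μ (ball 0 1) *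
      ∫⁻ y in Ioo 0 R, ENNReal.ofReal (y ^ (finrank ℝ E - 1)) * f y := by
  have hball : ∀ x : E, (ball (0:E) R).indicator (fun x => f ‖x‖) x = (Iio R).indicator f ‖x‖ :=
    fun x => by simp only [indicator, mem_ball_zero_iff, mem_Iio]
  have hIoi : ∀ y : ℝ, ENNReal.ofReal (y ^ (finrank ℝ E - 1)) * (Iio R).indicator f y =
      (Iio R).indicator (fun y => ENNReal.ofReal (y ^ (finrank ℝ E - 1)) * f y) y :=
    fun y => by by_cases h : y < R <;> simp [h]
  rw [← lintegral_indicator measurableSet_ball, funext hball,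
    lintegral_fun_norm_addHaar μ (hf.indicator measurableSet_Iio), funext hIoi,
    lintegral_indicator measurableSet_Iio, Measure.restrict_restrict measurableSet_Iio,
    Iio_inter_Ioi]

theorem setLIntegral_ball_setLIntegral_Ioo_norm {g : ℝ → ℝ≥0∞} (hg : Measurable g) (R : ℝ) :
    ∫⁻ x in ball (0:E) R, (∫⁻ ρ in Ioo ‖x‖ R, g ρ) ∂μ =
      (finrank ℝ E : ℝ≥0∞)⁻¹ * ∫⁻ x in ball (0:E) R, ENNReal.ofReal ‖x‖ * g ‖x‖ ∂μ := by
  set n := finrank ℝ E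
  have hn : 0 < n := finrank_pos
  have hweight : ∀ ρ ∈ Ioo 0 R, (∫⁻ r in Ioo 0 ρ, ENNReal.ofReal (r ^ (n - 1))) * g ρ =
      (n : ℝ≥0∞)⁻¹ * (ENNReal.ofReal (ρ ^ (n - 1)) * (ENNReal.ofReal ρ * g ρ)) := by
    intro ρ hρ
    rw [setLIntegral_Ioo_zero_ofReal_pow_pred hn hρ.1.le, ← mul_assoc (ENNReal.ofReal _),
      ← ENNReal.ofReal_mul (pow_nonneg hρ.1.le _), ← pow_succ, Nat.sub_add_cancel hn,
      ENNReal.ofReal_div_of_pos (Nat.cast_pos.2 hn), ENNReal.ofReal_natCast, ENNReal.div_eq_inv_mul,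
      mul_assoc]
  rw [setLIntegral_ball_fun_norm_addHaar μ (antitone_setLIntegral_Ioo g R).measurable,
    setLIntegral_Ioo_mul_setLIntegral_Ioo (by fun_prop) hg,
    setLIntegral_congr_fun measurableSet_Ioo hweight, lintegral_const_mul _ (by fun_prop),
    setLIntegral_ball_fun_norm_addHaar μ (f := fun y => ENNReal.ofReal y * g y) (by fun_prop)]
  ring

end Radial

theorem norm_perp (x : E2) : ‖perp x‖ = ‖x‖ := by
  simp [perp, EuclideanSpace.norm_eq, Fin.sum_univ_two, add_comm]

/-- If `u x = s(‖x‖) • x^⊥` is square integrable on the unit disk `D` and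
`p₀ x = - ∫_{‖x‖}^1 ρ s(ρ)² dρ`, then `p₀ ∈ L¹(D)` with
`‖p₀‖_{L¹(D)} ≤ (1/2) ‖u‖²_{L²(D)}`. -/
theorem stmt4 (s : ℝ → ℝ) (hs : Measurable s)
    (u : E2 → E2) (hu : ∀ x : E2, u x = s ‖x‖ • perp x)
    (p₀ : E2 → ℝ) (hp : ∀ x : E2, p₀ x = -∫ ρ in (‖x‖)..1, ρ * (s ρ)^2)
    (hL2 : MemLp u 2 (volume.restrict (ball (0:E2) 1))) :
    IntegrableOn p₀ (ball (0:E2) 1)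
    ∧ (∫ x in ball (0:E2) 1, |p₀ x|) ≤ (1/2) * ∫ x in ball (0:E2) 1, ‖u x‖^2 := by
  set g : ℝ → ℝ≥0∞ := fun ρ => ENNReal.ofReal (ρ * s ρ ^ 2)
  set G : ℝ → ℝ≥0∞ := fun r => ∫⁻ ρ in Ioo r 1, g ρ
  have hG : Measurable fun x : E2 => G ‖x‖ :=
    (antitone_setLIntegral_Ioo g 1).measurable.comp measurable_norm
  -- This also holds where the integral diverges: both sides are then `0`.
  have hp₀ : ∀ x ∈ ball (0:E2) 1, p₀ x = -(G ‖x‖).toReal := by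
    intro x hx
    rw [hp, intervalIntegral.integral_of_le (mem_ball_zero_iff.1 hx).le,
      integral_Ioc_eq_integral_Ioo, integral_eq_lintegral_of_nonneg_ae _ (by fun_prop)]
    filter_upwards [ae_restrict_mem measurableSet_Ioo] with ρ hρ
    exact mul_nonneg ((norm_nonneg x).trans hρ.1.le) (sq_nonneg _)
  have hu_sq : ∀ x, ENNReal.ofReal (‖u x‖ ^ 2) = ENNReal.ofReal ‖x‖ * g ‖x‖ := by
    intro x
    rw [hu, norm_smul, norm_perp, Real.norm_eq_abs, ← ENNReal.ofReal_mul (norm_nonneg _),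
      mul_pow, sq_abs]
    ring_nf
  have hu_int : IntegrableOn (fun x => ‖u x‖ ^ 2) (ball (0:E2) 1) :=
    hL2.integrable_norm_pow two_ne_zero
  have hG_lintegral : ∫⁻ x in ball (0:E2) 1, G ‖x‖ =
      2⁻¹ * ∫⁻ x in ball (0:E2) 1, ENNReal.ofReal (‖u x‖ ^ 2) := by
    rw [setLIntegral_ball_setLIntegral_Ioo_norm volume (by fun_prop) 1,
      finrank_euclideanSpace_fin, funext hu_sq]
    norm_num
  have hG_fin : ∫⁻ x in ball (0:E2) 1, G ‖x‖ ≠ ∞ := by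
    rw [hG_lintegral]
    exact ENNReal.mul_ne_top (by simp) hu_int.lintegral_lt_top.ne
  have hG_integrable : IntegrableOn (fun x => (G ‖x‖).toReal) (ball (0:E2) 1) :=
    integrable_toReal_of_lintegral_ne_top hG.aemeasurable hG_fin
  refine ⟨hG_integrable.neg.congr_fun (fun x hx => (hp₀ x hx).symm) measurableSet_ball, le_of_eq ?_⟩
  calc ∫ x in ball (0:E2) 1, |p₀ x| = ∫ x in ball (0:E2) 1, (G ‖x‖).toReal :=
        setIntegral_congr_fun measurableSet_ball fun x hx => by
          rw [hp₀ x hx, abs_neg, ENNReal.abs_toReal]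
    _ = (∫⁻ x in ball (0:E2) 1, G ‖x‖).toReal :=
        integral_toReal hG.aemeasurable (ae_lt_top hG hG_fin)
    _ = 1 / 2 * ∫ x in ball (0:E2) 1, ‖u x‖ ^ 2 := by
        rw [hG_lintegral, ENNReal.toReal_mul, integral_eq_lintegral_of_nonneg_ae
          (ae_of_all _ fun x => sq_nonneg _) hu_int.aestronglyMeasurable]
        norm_num
end
end

section
/- Let H(t,x,y) := (4πt)^{-1}·exp(−‖x−y‖²/(4t)) and let N(t,x,y) := y·∇_y H(t,x,y) for t > 0. There is a constant C > 0 such that for every t > 0 and every x ∈ ℝ² with ‖x‖ ≤ 1, ∫_{S¹} |N(t,x,y)| dσ(y) ≤ C·t^{-1}, where σ is arclength measure on the unit circle S¹. -/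
/-!
Differentiating the heat kernel gives `N(t,x,y) = (8πt²)⁻¹ e^{-r²/4t} ⟪y, x - y⟫` with
`r = ‖x - y‖`, and for `‖x‖ ≤ 1 = ‖y‖` one has `|⟪y, x - y⟫| ≤ r²/2 + r`. Since `u e^{-u} ≤ 1`,
this yields `|N| ≤ (4πt)⁻¹ + (4π t^{3/2})⁻¹ e^{-r²/8t}`. The constant term integrates to at most
`2π (4πt)⁻¹` because the circle has length `2π`. For the Gaussian term, parametrise the circle by
arclength around the point `p` nearest to `x`: as `‖p - y‖ ≤ 2r` and chords are at least `2/π`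
times arcs, `r ≥ |θ - θ₀| / π`, so the integral is bounded by a Gaussian integral over `ℝ`, which
is `O(√t)`.
-/

open Metric Set MeasureTheory Filter Real
open scoped RealInnerProductSpace MeasureTheory

noncomputable section

/-- The two-dimensional heat kernel `H(t,x,y) = (4πt)⁻¹ exp(-‖x-y‖²/(4t))`. -/
def heatK (t : ℝ) (x y : E2) : ℝ := (4 * π * t)⁻¹ * Real.exp (-‖x - y‖^2 / (4 * t))

/-- The kernel `N(t,x,y) = y ⬝ ∇_y H(t,x,y)`, the outward normal derivative in `y` of
the heat kernel on the unit circle; explicitly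
`N(t,x,y) = (y ⬝ (x-y)) (8πt²)⁻¹ exp(-‖x-y‖²/(4t))`. -/
def Nker (t : ℝ) (x y : E2) : ℝ := ⟪y, gradient (fun z => heatK t x z) y⟫

lemma hasGradientAt_heatK {t : ℝ} (ht : 0 < t) (x y : E2) :
    HasGradientAt (fun z => heatK t x z)
      (((8 * π * t ^ 2)⁻¹ * exp (-‖x - y‖ ^ 2 / (4 * t))) • (x - y)) y := by
  rw [hasGradientAt_iff_hasFDerivAt]
  have hsq := ((hasFDerivAt_id y).const_sub x).norm_sq
  have hprofile : HasDerivAt (fun u : ℝ => (4 * π * t)⁻¹ * exp (-u / (4 * t)))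
      ((4 * π * t)⁻¹ * (exp (-‖x - y‖ ^ 2 / (4 * t)) * -(4 * t)⁻¹)) (‖x - y‖ ^ 2) := by
    have h : HasDerivAt (fun u : ℝ => -u / (4 * t)) (-(4 * t)⁻¹) (‖x - y‖ ^ 2) := by
      simpa [neg_div, div_eq_mul_inv] using (hasDerivAt_neg (‖x - y‖ ^ 2)).div_const (4 * t)
    exact h.exp.const_mul _
  refine (hprofile.comp_hasFDerivAt y hsq).congr_fderiv ?_
  ext v
  have hπ := pi_pos
  simp only [mul_inv_rev, mul_neg, id_eq, map_sub, ContinuousLinearMap.comp_neg,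
    ContinuousLinearMap.comp_id, neg_sub, neg_smul, neg_apply, smul_apply, sub_apply,
    coe_innerSL_apply, nsmul_eq_mul, Nat.cast_ofNat, smul_eq_mul, map_smul,
    InnerProductSpace.toDual_apply_apply]
  field_simp
  ring

lemma Nker_eq {t : ℝ} (ht : 0 < t) (x y : E2) :
    Nker t x y = (8 * π * t ^ 2)⁻¹ * exp (-‖x - y‖ ^ 2 / (4 * t)) * ⟪y, x - y⟫ := by
  rw [Nker, (hasGradientAt_heatK ht x y).gradient, real_inner_smul_right]

lemma abs_inner_sub_le {V : Type*} [NormedAddCommGroup V] [InnerProductSpace ℝ V] {x y : V}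
    (hx : ‖x‖ ≤ 1) (hy : ‖y‖ = 1) : |⟪y, x - y⟫| ≤ ‖x - y‖ ^ 2 / 2 + ‖x - y‖ := by
  have hpolar : ⟪y, x - y⟫ = (‖x‖ ^ 2 - ‖y‖ ^ 2 - ‖x - y‖ ^ 2) / 2 := by
    rw [norm_sub_sq_real, inner_sub_right, real_inner_self_eq_norm_sq, real_inner_comm]
    ring
  have hxy : ‖y‖ - ‖x‖ ≤ ‖x - y‖ := by simpa [norm_sub_rev] using norm_sub_norm_le y x
  rw [hpolar, hy, abs_of_nonpos (by nlinarith [norm_nonneg (x - y)])] at *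
  nlinarith [norm_nonneg x]

lemma mul_exp_neg_div_le {a : ℝ} (ha : 0 < a) (u : ℝ) : u * exp (-u / a) ≤ a := by
  have h := mul_exp_neg_le_exp_neg_one (u / a)
  calc u * exp (-u / a) = a * (u / a * exp (-(u / a))) := by field_simp
    _ ≤ a * 1 := by gcongr; exact h.trans (exp_le_one_iff.2 (by norm_num))
    _ = a := mul_one a

lemma add_mul_exp_neg_sq_le {t : ℝ} (ht : 0 < t) (r : ℝ) :
    (r ^ 2 / 2 + r) * exp (-r ^ 2 / (4 * t)) ≤ 2 * t + 2 * √t * exp (-r ^ 2 / (8 * t)) := by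
  have hsplit : exp (-r ^ 2 / (4 * t)) = exp (-r ^ 2 / (8 * t)) * exp (-r ^ 2 / (8 * t)) := by
    rw [← exp_add]; ring_nf
  have hquad : r ^ 2 * exp (-r ^ 2 / (4 * t)) ≤ 4 * t := mul_exp_neg_div_le (by positivity) _
  have hlin : r * exp (-r ^ 2 / (8 * t)) ≤ 2 * √t := by
    rw [show 2 * √t = √(4 * t) by rw [sqrt_mul zero_le_four, show (4 : ℝ) = 2 ^ 2 by norm_num,
      sqrt_sq zero_le_two]]
    refine le_sqrt_of_sq_le ?_
    rwa [mul_pow, sq (exp _), ← hsplit]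
  calc (r ^ 2 / 2 + r) * exp (-r ^ 2 / (4 * t))
      = r ^ 2 * exp (-r ^ 2 / (4 * t)) / 2 +
          r * exp (-r ^ 2 / (8 * t)) * exp (-r ^ 2 / (8 * t)) := by rw [hsplit]; ring
    _ ≤ 4 * t / 2 + 2 * √t * exp (-r ^ 2 / (8 * t)) := by gcongr
    _ = 2 * t + 2 * √t * exp (-r ^ 2 / (8 * t)) := by ring

lemma abs_Nker_le {t : ℝ} (ht : 0 < t) {x y : E2} (hx : ‖x‖ ≤ 1) (hy : ‖y‖ = 1) :
    |Nker t x y| ≤ (4 * π * t)⁻¹ + (4 * π * t * √t)⁻¹ * exp (-‖x - y‖ ^ 2 / (8 * t)) := by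
  have hπ := pi_pos
  rw [Nker_eq ht, abs_mul, abs_of_nonneg (by positivity)]
  calc (8 * π * t ^ 2)⁻¹ * exp (-‖x - y‖ ^ 2 / (4 * t)) * |⟪y, x - y⟫|
      ≤ (8 * π * t ^ 2)⁻¹ * ((‖x - y‖ ^ 2 / 2 + ‖x - y‖) * exp (-‖x - y‖ ^ 2 / (4 * t))) := by
        rw [mul_assoc, mul_comm (exp _)]
        gcongr
        exact abs_inner_sub_le hx hy
    _ ≤ (8 * π * t ^ 2)⁻¹ * (2 * t + 2 * √t * exp (-‖x - y‖ ^ 2 / (8 * t))) := by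
        gcongr
        exact add_mul_exp_neg_sq_le ht _
    _ = (4 * π * t)⁻¹ + (4 * π * t * √t)⁻¹ * exp (-‖x - y‖ ^ 2 / (8 * t)) := by
        field_simp
        linear_combination 8 * exp (-(‖x - y‖ ^ 2 / (8 * t))) * mul_self_sqrt ht.le

lemma hausdorffMeasure_restrict_le_map {X : Type*} [EMetricSpace X] [MeasurableSpace X]
    [BorelSpace X] {γ : ℝ → X} (hγ : LipschitzWith 1 γ) {s : Set X} {I : Set ℝ}
    (hs : s ⊆ γ '' I) : (μH[1] : Measure X).restrict s ≤ (volume.restrict I).map γ := by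
  have hγm : Measurable γ := hγ.continuous.measurable
  refine Measure.le_iff.2 fun A hA => ?_
  rw [Measure.restrict_apply hA, Measure.map_apply hγm hA, Measure.restrict_apply (hγm hA),
    ← hausdorffMeasure_real]
  calc μH[1] (A ∩ s) ≤ μH[1] (γ '' (γ ⁻¹' A ∩ I)) := by
        refine measure_mono fun y ⟨hyA, hys⟩ => ?_
        obtain ⟨θ, hθ, rfl⟩ := hs hys
        exact ⟨θ, ⟨hyA, hθ⟩, rfl⟩
    _ ≤ μH[1] (γ ⁻¹' A ∩ I) := by
        simpa using hγ.hausdorffMeasure_image_le zero_le_one (γ ⁻¹' A ∩ I)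

lemma exists_mem_sphere_norm_sub_le {V : Type*} [NormedAddCommGroup V] [NormedSpace ℝ V]
    [Nontrivial V] {x : V} (hx : ‖x‖ ≤ 1) :
    ∃ p ∈ sphere (0 : V) 1, ∀ y ∈ sphere (0 : V) 1, ‖p - y‖ ≤ 2 * ‖x - y‖ := by
  obtain ⟨p, hp, hxp⟩ : ∃ p : V, ‖p‖ = 1 ∧ x = ‖x‖ • p := by
    rcases eq_or_ne x 0 with rfl | hx₀
    · obtain ⟨p, hp⟩ := exists_norm_eq V zero_le_one
      exact ⟨p, hp, by simp⟩
    · refine ⟨‖x‖⁻¹ • x, by simp [norm_smul, hx₀], ?_⟩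
      rw [smul_inv_smul₀ (norm_ne_zero_iff.2 hx₀)]
  refine ⟨p, mem_sphere_zero_iff_norm.2 hp, fun y hy => ?_⟩
  have hpx : ‖p - x‖ = 1 - ‖x‖ := by
    conv_lhs => rw [hxp, ← one_smul ℝ p, smul_smul, mul_one, ← sub_smul]
    rw [norm_smul, hp, mul_one, Real.norm_of_nonneg (sub_nonneg.2 hx)]
  have hxy : ‖y‖ - ‖x‖ ≤ ‖x - y‖ := by simpa [norm_sub_rev] using norm_sub_norm_le y x
  rw [mem_sphere_zero_iff_norm.1 hy] at hxy
  linarith [norm_sub_le_norm_sub_add_norm_sub p x y]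

def circleParam (θ : ℝ) : E2 := Complex.orthonormalBasisOneI.repr (circleMap 0 1 θ)

lemma lipschitzWith_circleParam : LipschitzWith 1 circleParam := by
  have h := Complex.orthonormalBasisOneI.repr.lipschitz.comp (lipschitzWith_circleMap 0 1)
  rwa [Real.nnabs.map_one, one_mul] at h

@[fun_prop]
lemma continuous_circleParam : Continuous circleParam := lipschitzWith_circleParam.continuous

lemma circleParam_mem_sphere (θ : ℝ) : circleParam θ ∈ sphere (0 : E2) 1 := by
  simp [circleParam]

lemma norm_circleParam_sub (θ θ₀ : ℝ) :
    ‖circleParam θ - circleParam θ₀‖ = |2 * sin ((θ - θ₀) / 2)| := by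
  have h : circleMap 0 1 θ - circleMap 0 1 θ₀ =
      Complex.exp (θ₀ * Complex.I) * (Complex.exp (Complex.I * (θ - θ₀ : ℝ)) - 1) := by
    rw [circleMap_zero, circleMap_zero, mul_sub, ← Complex.exp_add]
    push_cast; ring_nf
  rw [circleParam, circleParam, ← map_sub, LinearIsometryEquiv.norm_map, h, norm_mul,
    Complex.norm_exp_ofReal_mul_I, one_mul, Complex.norm_exp_I_mul_ofReal_sub_one, Real.norm_eq_abs]

lemma sphere_subset_image_circleParam (θ₀ : ℝ) :
    sphere (0 : E2) 1 ⊆ circleParam '' Ioc (θ₀ - π) (θ₀ + π) := by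
  intro y hy
  set z := Complex.orthonormalBasisOneI.repr.symm y
  have hz : ‖z‖ = 1 := (LinearIsometryEquiv.norm_map _ _).trans (mem_sphere_zero_iff_norm.1 hy)
  set w := z * Complex.exp (-θ₀ * Complex.I)
  have hw : ‖w‖ = 1 := by simp [w, hz, Complex.norm_exp]
  refine ⟨θ₀ + Complex.arg w, ⟨?_, ?_⟩, ?_⟩
  · linarith [Complex.neg_pi_lt_arg w]
  · linarith [Complex.arg_le_pi w]
  · have := Complex.norm_mul_exp_arg_mul_I w
    rw [hw, Complex.ofReal_one, one_mul] at this
    rw [circleParam, circleMap_zero, Complex.ofReal_one, one_mul, Complex.ofReal_add, add_mul,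
      Complex.exp_add, this, mul_left_comm, ← Complex.exp_add, ← add_mul, add_neg_cancel,
      zero_mul, Complex.exp_zero, mul_one]
    exact LinearIsometryEquiv.apply_symm_apply _ y

lemma mul_abs_sub_le_norm_circleParam_sub {θ θ₀ : ℝ} (h : |θ - θ₀| ≤ π) :
    2 / π * |θ - θ₀| ≤ ‖circleParam θ - circleParam θ₀‖ := by
  have hsin := mul_abs_le_abs_sin (x := (θ - θ₀) / 2) (by rw [abs_div, abs_two]; linarith)
  rw [norm_circleParam_sub, abs_mul, abs_two, abs_div, abs_two] at *
  linarith

lemma hausdorffMeasure_restrict_sphere_le_map (θ₀ : ℝ) :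
    (μH[1] : Measure E2).restrict (sphere 0 1) ≤
      (volume.restrict (Ioc (θ₀ - π) (θ₀ + π))).map circleParam :=
  hausdorffMeasure_restrict_le_map lipschitzWith_circleParam (sphere_subset_image_circleParam θ₀)

lemma hausdorffMeasure_sphere_le : μH[1] (sphere (0 : E2) 1) ≤ ENNReal.ofReal (2 * π) := by
  have h := Measure.le_iff'.1 (hausdorffMeasure_restrict_sphere_le_map 0) univ
  rwa [Measure.restrict_apply_univ, Measure.map_apply continuous_circleParam.measurable
    MeasurableSet.univ, preimage_univ, Measure.restrict_apply_univ, Real.volume_Ioc,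
    zero_add, zero_sub, sub_neg_eq_add, ← two_mul] at h

lemma setIntegral_sphere_le {g : E2 → ℝ} (hg : Continuous g) (hg₀ : 0 ≤ g) (θ₀ : ℝ) :
    ∫ y in sphere (0 : E2) 1, g y ∂μH[1] ≤ ∫ θ in Ioc (θ₀ - π) (θ₀ + π), g (circleParam θ) := by
  have hγ := continuous_circleParam
  rw [← integral_map hγ.aemeasurable hg.aestronglyMeasurable]
  refine integral_mono_measure (hausdorffMeasure_restrict_sphere_le_map θ₀)
    (ae_of_all _ hg₀) ?_
  exact (integrable_map_measure hg.aestronglyMeasurable hγ.aemeasurable).2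
    (hg.comp hγ).integrableOn_Ioc

lemma integral_sphere_exp_neg_norm_sub_sq_le {a : ℝ} (ha : 0 < a) {x : E2} (hx : ‖x‖ ≤ 1) :
    ∫ y in sphere (0 : E2) 1, exp (-‖x - y‖ ^ 2 / a) ∂μH[1] ≤ π * √(π * a) := by
  obtain ⟨p, hp, hpx⟩ := exists_mem_sphere_norm_sub_le hx
  obtain ⟨θ₀, -, rfl⟩ := sphere_subset_image_circleParam 0 hp
  have hg : Continuous fun θ => exp (-(π ^ 2 * a)⁻¹ * (θ - θ₀) ^ 2) := by fun_prop
  calc ∫ y in sphere (0 : E2) 1, exp (-‖x - y‖ ^ 2 / a) ∂μH[1]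
      ≤ ∫ θ in Ioc (θ₀ - π) (θ₀ + π), exp (-‖x - circleParam θ‖ ^ 2 / a) :=
        setIntegral_sphere_le (by fun_prop) (fun _ => (exp_pos _).le) θ₀
    _ ≤ ∫ θ in Ioc (θ₀ - π) (θ₀ + π), exp (-(π ^ 2 * a)⁻¹ * (θ - θ₀) ^ 2) := by
        refine setIntegral_mono_on (Continuous.integrableOn_Ioc (by fun_prop))
          hg.integrableOn_Ioc measurableSet_Ioc fun θ hθ => exp_le_exp.2 ?_
        have hchord := mul_abs_sub_le_norm_circleParam_sub (θ₀ := θ₀) (θ := θ)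
          (abs_le.2 ⟨by linarith [hθ.1], by linarith [hθ.2]⟩)
        have hpy := hpx (circleParam θ) (circleParam_mem_sphere θ)
        rw [norm_sub_rev] at hchord
        have hdist : |θ - θ₀| ≤ π * ‖x - circleParam θ‖ := by
          rw [div_mul_eq_mul_div, div_le_iff₀ pi_pos] at hchord
          nlinarith [pi_pos]
        have hsq : (θ - θ₀) ^ 2 ≤ π ^ 2 * ‖x - circleParam θ‖ ^ 2 := by
          rw [← sq_abs, ← mul_pow]
          exact pow_le_pow_left₀ (abs_nonneg _) hdist 2
        rw [neg_mul, neg_div, neg_le_neg_iff, inv_mul_eq_div, div_le_div_iff₀ (by positivity) ha]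
        nlinarith
    _ ≤ ∫ θ, exp (-(π ^ 2 * a)⁻¹ * (θ - θ₀) ^ 2) :=
        setIntegral_le_integral ((integrable_exp_neg_mul_sq (by positivity)).comp_sub_right θ₀)
          (ae_of_all _ fun _ => (exp_pos _).le)
    _ = π * √(π * a) := by
        rw [integral_sub_right_eq_self (fun θ => exp (-(π ^ 2 * a)⁻¹ * θ ^ 2)), integral_gaussian,
          div_inv_eq_mul, show π * (π ^ 2 * a) = π ^ 2 * (π * a) by ring,
          sqrt_mul (sq_nonneg π), sqrt_sq pi_pos.le]

/-- There is `C > 0` such that for all `t > 0` and all `x` in the closed unit disk,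
`∫_{S¹} |N(t,x,y)| dσ(y) ≤ C t⁻¹`, where `σ` is arclength (one-dimensional
Hausdorff) measure on the unit circle. -/
theorem stmt12 : ∃ C > (0:ℝ), ∀ t > (0:ℝ), ∀ x : E2, ‖x‖ ≤ 1 →
    (∫ y in sphere (0:E2) 1, |Nker t x y| ∂(μH[1])) ≤ C * t⁻¹ := by
  refine ⟨1 / 2 + √(8 * π) / 4, by positivity, fun t ht x hx => ?_⟩
  have hπ := pi_pos
  have hS : μH[1] (sphere (0 : E2) 1) < ⊤ :=
    hausdorffMeasure_sphere_le.trans_lt ENNReal.ofReal_lt_top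
  have hgauss : IntegrableOn (fun y => exp (-‖x - y‖ ^ 2 / (8 * t))) (sphere (0 : E2) 1) μH[1] :=
    IntegrableOn.of_bound hS (by fun_prop) 1 (ae_of_all _ fun y => by
      simpa using exp_le_one_iff.2 (div_nonpos_of_nonpos_of_nonneg (neg_nonpos.2 (sq_nonneg _))
        (by positivity : (0 : ℝ) ≤ 8 * t)))
  have hconst : IntegrableOn (fun _ => (4 * π * t)⁻¹) (sphere (0 : E2) 1) μH[1] :=
    integrableOn_const hS.ne
  calc ∫ y in sphere (0 : E2) 1, |Nker t x y| ∂μH[1]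
      ≤ ∫ y in sphere (0 : E2) 1,
          (4 * π * t)⁻¹ + (4 * π * t * √t)⁻¹ * exp (-‖x - y‖ ^ 2 / (8 * t)) ∂μH[1] := by
        refine integral_mono_of_nonneg (ae_of_all _ fun _ => abs_nonneg _)
          (hconst.add (hgauss.const_mul _)) ?_
        filter_upwards [ae_restrict_mem isClosed_sphere.measurableSet] with y hy
        exact abs_Nker_le ht hx (mem_sphere_zero_iff_norm.1 hy)
    _ = (4 * π * t)⁻¹ * μH[1].real (sphere (0 : E2) 1) +
          (4 * π * t * √t)⁻¹ * ∫ y in sphere (0 : E2) 1, exp (-‖x - y‖ ^ 2 / (8 * t)) ∂μH[1] := by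
        rw [integral_add hconst (hgauss.const_mul _), setIntegral_const,
          integral_const_mul, smul_eq_mul, mul_comm]
    _ ≤ (4 * π * t)⁻¹ * (2 * π) + (4 * π * t * √t)⁻¹ * (π * √(π * (8 * t))) := by
        gcongr
        · exact ENNReal.toReal_le_of_le_ofReal (by positivity) hausdorffMeasure_sphere_le
        · exact integral_sphere_exp_neg_norm_sub_sq_le (by positivity) hx
    _ = (1 / 2 + √(8 * π) / 4) * t⁻¹ := by
        rw [show π * (8 * t) = 8 * π * t by ring, sqrt_mul (by positivity)]
        field_simp
        ring
end
end
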